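/- Let A be a finite-dimensional pre-Malcev algebra over a field F of characteristic zero and T : A* → A an invertible linear map. Define a bilinear form B : A × A → F by B(x, y) = ⟨T^{-1}(x), y⟩. Then T is an O-operator of A associated to the bimodule (A*; L* − R*, −R*), i.e. T(ξ)·T(η) = T((L*_{T(ξ)} − R*_{T(ξ)})(η) − R*_{T(η)}(ξ)) for all ξ, η ∈ A*, if and only if B(x·y, z) = −B(y, x·z) + B(y, z·x) + B(x, z·y) for all x, y, z ∈ A. -/

import Mathlib

open TensorProduct

section Defs

variable {F : Type*} [Field F]
variable {A : Type*} [AddCommGroup A] [Module F A]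
variable {V : Type*} [AddCommGroup V] [Module F V]

/-- The pre-Malcev identity for a (curried) bilinear product. -/
def PreMalcevFn {A : Type*} [AddCommGroup A] (mul : A → A → A) : Prop :=
  ∀ x y z t : A,
    mul (mul y z) (mul x t) - mul (mul z y) (mul x t)
      + mul (mul (mul x y) z) t - mul (mul (mul y x) z) t
      - mul (mul z (mul x y)) t + mul (mul z (mul y x)) t
      + mul y (mul (mul x z) t) - mul y (mul (mul z x) t)
      - mul x (mul y (mul z t)) + mul z (mul x (mul y t)) = 0

/-- The semidirect-product multiplication on `A × V`. -/
def sdFn (mul : A →ₗ[F] A →ₗ[F] A) (l r : A →ₗ[F] Module.End F V) :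
    A × V → A × V → A × V :=
  fun p q => (mul p.1 q.1, l p.1 q.2 + r q.1 p.2)

/-- `(V; l, r)` is a bimodule of the pre-Malcev algebra `(A, mul)` iff the semidirect
product `A ⋉ V` is again a pre-Malcev algebra. -/
def IsBimodule (mul : A →ₗ[F] A →ₗ[F] A) (l r : A →ₗ[F] Module.End F V) : Prop :=
  PreMalcevFn (sdFn mul l r)

/-- `T` is an O-operator of `(A, mul)` associated to the bimodule `(V; l, r)`. -/
def IsOOp (mul : A →ₗ[F] A →ₗ[F] A) (l r : A →ₗ[F] Module.End F V)
    (T : V →ₗ[F] A) : Prop :=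
  ∀ v w : V, mul (T v) (T w) = T (l (T v) w + r (T w) v)

/-- Two O-operators are compatible if every linear combination is again an O-operator. -/
def Compatible (mul : A →ₗ[F] A →ₗ[F] A) (l r : A →ₗ[F] Module.End F V)
    (T₁ T₂ : V →ₗ[F] A) : Prop :=
  ∀ k₁ k₂ : F, IsOOp mul l r (k₁ • T₁ + k₂ • T₂)

/-- `N` is a Nijenhuis operator for the product `mul`. -/
def IsNijenhuisFn (mul : A → A → A) (N : A →ₗ[F] A) : Prop :=
  ∀ x y : A, mul (N x) (N y) = N (mul (N x) y + mul x (N y) - N (mul x y))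

/-- The dual map `ℓ* : A → End(V*)`, `⟨ℓ*_x ξ, v⟩ = -⟨ξ, ℓ_x v⟩`. -/
def dualRep (l : A →ₗ[F] Module.End F V) :
    A →ₗ[F] Module.End F (Module.Dual F V) where
  toFun x := -(l x).dualMap
  map_add' x y := by ext ξ v; simp; abel
  map_smul' c x := by ext ξ v; simp

/-- The map `ℓ* - 𝔯* : A → End(V*)`, i.e. `x ↦ ℓ*_x - 𝔯*_x`; it is equal to
`dualRep l - dualRep r`. -/
def dualRepSub (l r : A →ₗ[F] Module.End F V) :
    A →ₗ[F] Module.End F (Module.Dual F V) where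
  toFun x := -(l x).dualMap - -((r x).dualMap)
  map_add' x y := by ext ξ v; simp; abel
  map_smul' c x := by ext ξ v; simp

/-- The map `-𝔯* : A → End(V*)`, i.e. `x ↦ -(𝔯*_x)`; it is equal to `-(dualRep r)`. -/
def dualRepNeg (r : A →ₗ[F] Module.End F V) :
    A →ₗ[F] Module.End F (Module.Dual F V) where
  toFun x := -(-((r x).dualMap))
  map_add' x y := by ext ξ v; simp
  map_smul' c x := by ext ξ v; simp

/-- The semidirect-product multiplication as a bundled bilinear map. -/
def sdMul (mul : A →ₗ[F] A →ₗ[F] A) (l r : A →ₗ[F] Module.End F V) :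
    (A × V) →ₗ[F] (A × V) →ₗ[F] (A × V) :=
  LinearMap.mk₂ F (sdFn mul l r)
    (fun p p' q => by
      apply Prod.ext <;> simp [sdFn, map_add] <;> abel)
    (fun c p q => by
      apply Prod.ext <;> simp [sdFn, map_smul, smul_add])
    (fun p q q' => by
      apply Prod.ext <;> simp [sdFn, map_add] <;> abel)
    (fun c p q => by
      apply Prod.ext <;> simp [sdFn, map_smul, smul_add])

/-- The left-hand side `-r₁₂·r₁₃ + r₁₂·r₂₃ + [r₁₃, r₂₃]` of the analogue of the
classical Yang-Baxter equation on a pre-Malcev algebra `(B, mul)`. -/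
noncomputable def cybeLHS {B : Type*} [AddCommGroup B] [Module F B]
    (mul : B →ₗ[F] B →ₗ[F] B) (r : B ⊗[F] B) : B ⊗[F] (B ⊗[F] B) :=
  -(TensorProduct.map (TensorProduct.lift mul) LinearMap.id
      (TensorProduct.tensorTensorTensorComm F B B B B (r ⊗ₜ[F] r)))
  + TensorProduct.map LinearMap.id (TensorProduct.map (TensorProduct.lift mul) LinearMap.id)
      (TensorProduct.map LinearMap.id (TensorProduct.assoc F B B B).symm.toLinearMap
        (TensorProduct.assoc F B B (B ⊗[F] B) (r ⊗ₜ[F] r)))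
  + TensorProduct.map LinearMap.id (TensorProduct.map LinearMap.id
      (TensorProduct.lift mul - TensorProduct.lift mul ∘ₗ (TensorProduct.comm F B B).toLinearMap))
      (TensorProduct.assoc F B B (B ⊗[F] B)
        (TensorProduct.tensorTensorTensorComm F B B B B (r ⊗ₜ[F] r)))

/-- `r` is a solution of the analogue of the CYBE on `(B, mul)`. -/
noncomputable def IsCYBE {B : Type*} [AddCommGroup B] [Module F B]
    (mul : B →ₗ[F] B →ₗ[F] B) (r : B ⊗[F] B) : Prop :=
  cybeLHS mul r = 0

/-- The linear map `T_r : A* → A` associated to `r ∈ A ⊗ A`,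
`⟨f, T_r g⟩ = ⟨f ⊗ g, r⟩`. -/
noncomputable def trMap (r : A ⊗[F] A) : Module.Dual F A →ₗ[F] A :=
  dualTensorHom F (Module.Dual F A) A
    (TensorProduct.map (Module.Dual.eval F A) LinearMap.id
      (TensorProduct.comm F A A r))

/-- The product `⋄^T` on `V` induced by a linear map `T : V → A`. -/
def dia (l r : A →ₗ[F] Module.End F V) (T : V →ₗ[F] A) : V → V → V :=
  fun u v => l (T u) v + r (T v) u

/-- The deformation `⋄^T_S` of `⋄^T` by `S`. -/
def diaS (l r : A →ₗ[F] Module.End F V) (T : V →ₗ[F] A) (S : V →ₗ[F] V) : V → V → V :=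
  fun u v => dia l r T (S u) v + dia l r T u (S v) - S (dia l r T u v)

/-- `(N, S)` is a Nijenhuis pair on `(A, mul)` with bimodule `(V; l, r)`. -/
def IsNijPair (mul : A →ₗ[F] A →ₗ[F] A) (l r : A →ₗ[F] Module.End F V)
    (N : A →ₗ[F] A) (S : V →ₗ[F] V) : Prop :=
  IsNijenhuisFn (fun x y => mul x y) N ∧
  (∀ (x : A) (v : V), l (N x) (S v) = S (l (N x) v + l x (S v) - S (l x v))) ∧
  (∀ (x : A) (v : V), r (N x) (S v) = S (r (N x) v + r x (S v) - S (r x v)))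

/-- `(N, S)` is a dual-Nijenhuis pair on `(A, mul)` with bimodule `(V; l, r)`. -/
def IsDualNijPair (mul : A →ₗ[F] A →ₗ[F] A) (l r : A →ₗ[F] Module.End F V)
    (N : A →ₗ[F] A) (S : V →ₗ[F] V) : Prop :=
  IsNijenhuisFn (fun x y => mul x y) N ∧
  (∀ (x : A) (v : V), l (N x) (S v) = S (l (N x) v) + l x (S (S v)) - S (l x (S v))) ∧
  (∀ (x : A) (v : V), r (N x) (S v) = S (r (N x) v) + r x (S (S v)) - S (r x (S v)))

/-- `(N, S)` is a perfect Nijenhuis pair. -/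
def IsPerfectNijPair (mul : A →ₗ[F] A →ₗ[F] A) (l r : A →ₗ[F] Module.End F V)
    (N : A →ₗ[F] A) (S : V →ₗ[F] V) : Prop :=
  IsNijPair mul l r N S ∧
  (∀ (x : A) (v : V), S (S (l x v)) + l x (S (S v)) = (2 : F) • S (l x (S v))) ∧
  (∀ (x : A) (v : V), S (S (r x v)) + r x (S (S v)) = (2 : F) • S (r x (S v)))

/-- `(T, N, S)` is an O-N structure on `(A, mul)` with bimodule `(V; l, r)`. -/
def IsONStruct (mul : A →ₗ[F] A →ₗ[F] A) (l r : A →ₗ[F] Module.End F V)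
    (T : V →ₗ[F] A) (N : A →ₗ[F] A) (S : V →ₗ[F] V) : Prop :=
  IsOOp mul l r T ∧ IsNijPair mul l r N S ∧ N ∘ₗ T = T ∘ₗ S ∧
  ∀ u v : V, dia l r (N ∘ₗ T) u v = diaS l r T S u v

/-- `(T, N, S)` is an O-dual-N structure on `(A, mul)` with bimodule `(V; l, r)`. -/
def IsODualNStruct (mul : A →ₗ[F] A →ₗ[F] A) (l r : A →ₗ[F] Module.End F V)
    (T : V →ₗ[F] A) (N : A →ₗ[F] A) (S : V →ₗ[F] V) : Prop :=
  IsOOp mul l r T ∧ IsDualNijPair mul l r N S ∧ N ∘ₗ T = T ∘ₗ S ∧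
  ∀ u v : V, dia l r (N ∘ₗ T) u v = diaS l r T S u v

end Defs

section OOperator

variable {F A V : Type*} [Field F] [AddCommGroup A] [Module F A] [AddCommGroup V] [Module F V]

@[simp]
theorem dualRepSub_apply_apply (l r : A →ₗ[F] Module.End F V) (x : A) (ξ : Module.Dual F V)
    (v : V) : dualRepSub l r x ξ v = -ξ (l x v) + ξ (r x v) := by
  simp [dualRepSub, neg_add_eq_sub]

@[simp]
theorem dualRepNeg_apply_apply (r : A →ₗ[F] Module.End F V) (x : A) (ξ : Module.Dual F V)
    (v : V) : dualRepNeg r x ξ v = ξ (r x v) := by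
  simp [dualRepNeg]

theorem isOOp_iff_of_linearEquiv (mul : A →ₗ[F] A →ₗ[F] A) (l r : A →ₗ[F] Module.End F V)
    (T : V ≃ₗ[F] A) :
    IsOOp mul l r T.toLinearMap ↔
      ∀ x y : A, T.symm (mul x y) = l x (T.symm y) + r y (T.symm x) := by
  refine ⟨fun h x y => ?_, fun h v w => ?_⟩
  · simpa using congrArg T.symm (h (T.symm x) (T.symm y))
  · simpa using congrArg T (h (T v) (T w))

end OOperator

theorem stmt4_general {F A : Type*} [Field F] [AddCommGroup A] [Module F A]
    (mul : A →ₗ[F] A →ₗ[F] A)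
    (T : Module.Dual F A ≃ₗ[F] A)
    (B : A → A → F) (hB : ∀ x y : A, B x y = T.symm x y) :
    IsOOp mul (dualRepSub mul mul.flip) (dualRepNeg mul.flip) T.toLinearMap ↔
      ∀ x y z : A, B (mul x y) z = -B y (mul x z) + B y (mul z x) + B x (mul z y) := by
  simp only [isOOp_iff_of_linearEquiv, LinearMap.ext_iff, hB]
  simp [add_assoc]

/-- for an invertible `T : A* → A` with associated bilinear form
`B(x, y) = ⟨T⁻¹ x, y⟩`, `T` is an O-operator associated to `(A*; L* - R*, -R*)` iff
`B(x·y, z) = -B(y, x·z) + B(y, z·x) + B(x, z·y)`. -/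
theorem stmt4 {F A : Type*} [Field F] [CharZero F] [AddCommGroup A] [Module F A]
    [FiniteDimensional F A]
    (mul : A →ₗ[F] A →ₗ[F] A) (hA : PreMalcevFn fun x y => mul x y)
    (T : Module.Dual F A ≃ₗ[F] A)
    (B : A → A → F) (hB : ∀ x y : A, B x y = T.symm x y) :
    IsOOp mul (dualRepSub mul mul.flip) (dualRepNeg mul.flip) T.toLinearMap ↔
      ∀ x y z : A, B (mul x y) z = -B y (mul x z) + B y (mul z x) + B x (mul z y) :=
  stmt4_general mul T B hB
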